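/- arXiv:math/0401044 — 5 statements merged into one kernel-verified Lean document; each statement's English description precedes it below -/
import Mathlib

section
/- Let α₀ be irrational with convergent p_n/q_n, q_n ≥ 2, and let p'/q' be a rational with q' < q_n. Suppose a complex number α lies in the open disk of radius (log 2)/(2π q') ≤ 1/(8q') tangent to the real axis at p'/q' (from either side). Then |α − α₀| ≥ 1/(2 q_n³). -/
/-! By the best-approximation property of continued fractions,
`|q'α₀ - p'| ≥ |qₙ₋₁α₀ - pₙ₋₁| ≥ 1/(2qₙ)`, so `x = p'/q' - α₀` satisfies `|x| ≥ 1/(2q'qₙ)`.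
A point of a disk of radius `r ≤ 1/(8q')` tangent to `ℝ` at `p'/q'` is at distance at least
`√(x² + r²) - r` from `α₀` (Pythagoras), and this is at least `1/(2qₙ³)` because `q' < qₙ`. -/

/-- The Gauss map iteration: `gaussSeq α 0 = frac α`, `gaussSeq α (n+1) = frac (1 / gaussSeq α n)`. -/
noncomputable def gaussSeq (α : ℝ) : ℕ → ℝ
  | 0 => Int.fract α
  | n + 1 => Int.fract (1 / gaussSeq α n)

/-- The partial quotients of the continued fraction expansion of `α`:
`a₀ = ⌊α⌋` and `a_{n+1} = ⌊1/α_n⌋`. -/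
noncomputable def aSeq (α : ℝ) : ℕ → ℤ
  | 0 => ⌊α⌋
  | n + 1 => ⌊1 / gaussSeq α n⌋

/-- The denominators `q_n` of the continued fraction convergents of `α`:
`q₀ = 1`, `q₁ = a₁`, `q_{n+2} = a_{n+2} q_{n+1} + q_n`. -/
noncomputable def qSeq (α : ℝ) : ℕ → ℤ
  | 0 => 1
  | 1 => aSeq α 1
  | n + 2 => aSeq α (n + 2) * qSeq α (n + 1) + qSeq α n

/-- The numerators `p_n` of the continued fraction convergents of `α`:
`p₀ = a₀`, `p₁ = a₁ a₀ + 1`, `p_{n+2} = a_{n+2} p_{n+1} + p_n`. -/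
noncomputable def pSeq (α : ℝ) : ℕ → ℤ
  | 0 => aSeq α 0
  | 1 => aSeq α 1 * aSeq α 0 + 1
  | n + 2 => aSeq α (n + 2) * pSeq α (n + 1) + pSeq α n

open Complex

open Metric

theorem abs_le_abs_add_of_mul_nonneg {R : Type*} [Ring R] [LinearOrder R] [IsStrictOrderedRing R]
    {a b : R} (h : 0 ≤ a * b) : |b| ≤ |a + b| := by
  rw [abs_add_eq_add_abs_iff _ _ |>.2 (mul_nonneg_iff.1 h)]
  exact le_add_of_nonneg_left (abs_nonneg a)

section ContinuedFraction

variable {α : ℝ}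

theorem aSeq_succ_eq (α : ℝ) (n : ℕ) :
    (aSeq α (n + 1) : ℝ) = 1 / gaussSeq α n - gaussSeq α (n + 1) := by
  simp only [aSeq, gaussSeq, ← Int.self_sub_floor, sub_sub_cancel]

theorem pSeq_succ_mul_qSeq_sub (α : ℝ) :
    ∀ n, pSeq α (n + 1) * qSeq α n - pSeq α n * qSeq α (n + 1) = (-1) ^ n
  | 0 => by simp only [pSeq, qSeq]; ring
  | n + 1 => by
      simp only [pSeq, qSeq]
      linear_combination (-1 : ℤ) * pSeq_succ_mul_qSeq_sub α n

theorem irrational_gaussSeq (h : Irrational α) : ∀ n, Irrational (gaussSeq α n)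
  | 0 => by rw [gaussSeq, ← Int.self_sub_floor]; exact h.sub_intCast _
  | n + 1 => by
      rw [gaussSeq, ← Int.self_sub_floor, one_div]
      exact (irrational_gaussSeq h n).inv.sub_intCast _

theorem gaussSeq_pos (h : Irrational α) (n : ℕ) : 0 < gaussSeq α n := by
  have hne : gaussSeq α n ≠ 0 := by simpa using (irrational_gaussSeq h n).ne_int 0
  cases n <;> exact (Int.fract_nonneg _).lt_of_ne' hne

theorem gaussSeq_lt_one (α : ℝ) : ∀ n, gaussSeq α n < 1
  | 0 => Int.fract_lt_one _
  | _ + 1 => Int.fract_lt_one _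

theorem one_le_aSeq_succ (h : Irrational α) (n : ℕ) : 1 ≤ aSeq α (n + 1) := by
  have : (1 : ℝ) ≤ 1 / gaussSeq α n :=
    (one_le_div (gaussSeq_pos h n)).2 (gaussSeq_lt_one α n).le
  exact Int.le_floor.2 (by exact_mod_cast this)

theorem one_le_qSeq (h : Irrational α) : ∀ n, 1 ≤ qSeq α n
  | 0 => le_rfl
  | 1 => one_le_aSeq_succ h 0
  | n + 2 => by
      have := one_le_qSeq h n
      have := one_le_qSeq h (n + 1)
      have := one_le_aSeq_succ h (n + 1)
      simp only [qSeq]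
      nlinarith

theorem qSeq_le_qSeq_succ (h : Irrational α) : ∀ n, qSeq α n ≤ qSeq α (n + 1)
  | 0 => one_le_aSeq_succ h 0
  | n + 1 => by
      have := one_le_qSeq h n
      have := one_le_qSeq h (n + 1)
      have := one_le_aSeq_succ h (n + 1)
      simp only [qSeq]
      nlinarith

noncomputable def dSeq (α : ℝ) (n : ℕ) : ℝ := qSeq α n * α - pSeq α n

theorem dSeq_add_two (α : ℝ) (n : ℕ) :
    dSeq α (n + 2) = aSeq α (n + 2) * dSeq α (n + 1) + dSeq α n := by
  simp only [dSeq, qSeq, pSeq]; push_cast; ring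

theorem qSeq_succ_mul_dSeq_sub (α : ℝ) (n : ℕ) :
    qSeq α (n + 1) * dSeq α n - qSeq α n * dSeq α (n + 1) = (-1) ^ n := by
  have := congrArg (Int.cast : ℤ → ℝ) (pSeq_succ_mul_qSeq_sub α n)
  push_cast at this
  simp only [dSeq]
  linear_combination this

theorem dSeq_succ (h : Irrational α) :
    ∀ n, dSeq α (n + 1) = -gaussSeq α (n + 1) * dSeq α n
  | 0 => by
      have h0 := (gaussSeq_pos h 0).ne'
      have hd0 : dSeq α 0 = gaussSeq α 0 := by
        simp only [dSeq, qSeq, pSeq, aSeq, gaussSeq, ← Int.self_sub_floor]; push_cast; ring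
      have hd1 : dSeq α 1 = aSeq α 1 * dSeq α 0 - 1 := by
        simp only [dSeq, qSeq, pSeq]; push_cast; ring
      rw [hd1, hd0, aSeq_succ_eq]
      field_simp
      ring
  | n + 1 => by
      have hg := (gaussSeq_pos h (n + 1)).ne'
      rw [dSeq_add_two, aSeq_succ_eq, dSeq_succ h n]
      field_simp
      ring

theorem dSeq_ne_zero (h : Irrational α) (n : ℕ) : dSeq α n ≠ 0 := by
  have hq : qSeq α n ≠ 0 := by have := one_le_qSeq h n; omega
  simpa [dSeq, sub_eq_zero] using (h.intCast_mul hq).ne_int (pSeq α n)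

theorem dSeq_succ_mul_dSeq_neg (h : Irrational α) (n : ℕ) : dSeq α (n + 1) * dSeq α n < 0 := by
  rw [dSeq_succ h, neg_mul, neg_mul, neg_neg_iff_pos, mul_assoc]
  exact mul_pos (gaussSeq_pos h _) (mul_self_pos.2 (dSeq_ne_zero h n))

theorem abs_dSeq_succ_le (h : Irrational α) (n : ℕ) : |dSeq α (n + 1)| ≤ |dSeq α n| := by
  rw [dSeq_succ h, abs_mul, abs_neg, abs_of_pos (gaussSeq_pos h _)]
  exact mul_le_of_le_one_left (abs_nonneg _) (gaussSeq_lt_one α _).le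

theorem one_div_two_qSeq_succ_le_abs_dSeq (h : Irrational α) (n : ℕ) :
    1 / (2 * qSeq α (n + 1) : ℝ) ≤ |dSeq α n| := by
  have hq : (0 : ℝ) < qSeq α (n + 1) := by exact_mod_cast (one_le_qSeq h _).trans_lt' one_pos
  have hmono : (qSeq α n : ℝ) ≤ qSeq α (n + 1) := by exact_mod_cast qSeq_le_qSeq_succ h n
  have hq0 : (0 : ℝ) ≤ qSeq α n := by exact_mod_cast (one_le_qSeq h n).trans' zero_le_one
  rw [div_le_iff₀ (by positivity)]
  calc (1 : ℝ) = |qSeq α (n + 1) * dSeq α n - qSeq α n * dSeq α (n + 1)| := by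
        rw [qSeq_succ_mul_dSeq_sub]; simp
    _ ≤ qSeq α (n + 1) * |dSeq α n| + qSeq α n * |dSeq α (n + 1)| := by
        refine (abs_sub _ _).trans ?_
        rw [abs_mul, abs_mul, abs_of_pos hq, abs_of_nonneg hq0]
    _ ≤ qSeq α (n + 1) * |dSeq α n| + qSeq α (n + 1) * |dSeq α n| := by
        gcongr _ + ?_
        exact mul_le_mul hmono (abs_dSeq_succ_le h n) (abs_nonneg _) hq.le
    _ = |dSeq α n| * (2 * qSeq α (n + 1)) := by ring

theorem abs_dSeq_le_abs_mul_sub (h : Irrational α) {n : ℕ} {p q : ℤ} (hq : 0 < q)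
    (hlt : q < qSeq α (n + 1)) : |dSeq α n| ≤ |q * α - p| := by
  set ε : ℤ := (-1) ^ n
  have hε : ε * ε = 1 := by rw [← pow_add, ← two_mul, pow_mul]; norm_num
  have hdet := pSeq_succ_mul_qSeq_sub α n
  -- coordinates of `(p, q)` in the unimodular basis `(pₙ₊₁, qₙ₊₁), (pₙ, qₙ)`
  set x := ε * (p * qSeq α n - q * pSeq α n)
  set y := ε * (q * pSeq α (n + 1) - p * qSeq α (n + 1))
  have hqxy : x * qSeq α (n + 1) + y * qSeq α n = q := by linear_combination (ε * q) * hdet + q * hε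
  have hpxy : x * pSeq α (n + 1) + y * pSeq α n = p := by linear_combination (ε * p) * hdet + p * hε
  have hsplit : q * α - p = x * dSeq α (n + 1) + y * dSeq α n := by
    have hq' := congrArg (Int.cast : ℤ → ℝ) hqxy
    have hp' := congrArg (Int.cast : ℤ → ℝ) hpxy
    push_cast at hq' hp'
    simp only [dSeq]
    linear_combination hp' - α * hq'
  have hqn := one_le_qSeq h n
  have hy : y ≠ 0 := by
    rintro hy
    rw [hy, zero_mul, add_zero] at hqxy
    rcases le_or_gt x 0 with hx | hx <;> nlinarith
  have hxy : x * y ≤ 0 := by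
    by_contra! hxy
    rcases pos_and_pos_or_neg_and_neg_of_mul_pos hxy with ⟨hx, hy⟩ | ⟨hx, hy⟩ <;> nlinarith
  have hxyR : (x : ℝ) * y ≤ 0 := by exact_mod_cast hxy
  have hyR : (1 : ℝ) ≤ |(y : ℝ)| := by exact_mod_cast Int.one_le_abs hy
  calc |dSeq α n| ≤ |(y : ℝ)| * |dSeq α n| := le_mul_of_one_le_left (abs_nonneg _) hyR
    _ = |y * dSeq α n| := (abs_mul _ _).symm
    _ ≤ |x * dSeq α (n + 1) + y * dSeq α n| := by
        refine abs_le_abs_add_of_mul_nonneg ?_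
        have := mul_nonneg_of_nonpos_of_nonpos hxyR (dSeq_succ_mul_dSeq_neg h n).le
        linarith [show (x : ℝ) * dSeq α (n + 1) * (y * dSeq α n)
          = x * y * (dSeq α (n + 1) * dSeq α n) by ring]
    _ = |q * α - p| := by rw [hsplit]

end ContinuedFraction

theorem log_two_div_two_pi_mul_le {q : ℝ} (hq : 0 < q) :
    Real.log 2 / (2 * Real.pi * q) ≤ 1 / (8 * q) := by
  rw [div_le_div_iff₀ (by positivity) (by positivity)]
  nlinarith [Real.log_two_lt_d9, Real.pi_gt_three]

theorem sqrt_sq_add_sq_sub_le_norm_sub {x r : ℝ} {z : ℂ}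
    (hz : z ∈ ball (x + r * I) r ∪ ball (x - r * I) r) (a : ℝ) :
    √((x - a) ^ 2 + r ^ 2) - r ≤ ‖z - a‖ := by
  rcases hz with hz | hz
  · have hc : ‖(x + r * I : ℂ) - a‖ = √((x - a) ^ 2 + r ^ 2) := by
      rw [← norm_add_mul_I]; push_cast; ring_nf
    have := norm_sub_le_norm_sub_add_norm_sub (x + r * I : ℂ) z a
    rw [mem_ball, dist_eq_norm, norm_sub_rev] at hz
    linarith
  · have hc : ‖(x - r * I : ℂ) - a‖ = √((x - a) ^ 2 + r ^ 2) := by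
      rw [← neg_sq r, ← norm_add_mul_I]; push_cast; ring_nf
    have := norm_sub_le_norm_sub_add_norm_sub (x - r * I : ℂ) z a
    rw [mem_ball, dist_eq_norm, norm_sub_rev] at hz
    linarith

theorem one_div_two_cube_le_sqrt_sub {q Q r x : ℝ} (hq : 1 ≤ q) (hqQ : q + 1 ≤ Q)
    (hr : r ≤ 1 / (8 * q)) (hx : 1 / (2 * q * Q) ≤ |x|) :
    1 / (2 * Q ^ 3) ≤ √(x ^ 2 + r ^ 2) - r := by
  set c := 1 / (2 * Q ^ 3)
  have hQ : 2 ≤ Q := by linarith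
  have hc : 0 ≤ c := by positivity
  have hrc : 2 * r * c ≤ 1 / (8 * q ^ 2 * Q ^ 2) :=
    calc 2 * r * c ≤ 2 * (1 / (8 * q)) * c := by gcongr
      _ = 1 / (8 * q * Q ^ 3) := by simp only [c]; field_simp
      _ ≤ 1 / (8 * q ^ 2 * Q ^ 2) := by
        gcongr 1 / ?_
        nlinarith [mul_le_mul_of_nonneg_left (by linarith : q ≤ Q) (by positivity : 0 ≤ 8 * q * Q ^ 2)]
  have hcc : c ^ 2 ≤ 1 / (8 * q ^ 2 * Q ^ 2) :=
    calc c ^ 2 = 1 / (4 * Q ^ 6) := by simp only [c]; field_simp; ring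
      _ ≤ 1 / (8 * q ^ 2 * Q ^ 2) := by
        gcongr 1 / ?_
        have hqQ2 : q ^ 2 ≤ Q ^ 2 := by gcongr; linarith
        nlinarith [mul_le_mul_of_nonneg_left hqQ2 (by positivity : 0 ≤ 8 * Q ^ 2),
          mul_le_mul_of_nonneg_left (by nlinarith : (2 : ℝ) ≤ Q ^ 2) (by positivity : 0 ≤ 4 * Q ^ 4)]
  have hxx : 1 / (4 * q ^ 2 * Q ^ 2) ≤ x ^ 2 :=
    calc 1 / (4 * q ^ 2 * Q ^ 2) = (1 / (2 * q * Q)) ^ 2 := by field_simp; ring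
      _ ≤ |x| ^ 2 := by gcongr
      _ = x ^ 2 := sq_abs x
  have hsq : (r + c) ^ 2 ≤ x ^ 2 + r ^ 2 := by
    have : 1 / (8 * q ^ 2 * Q ^ 2) + 1 / (8 * q ^ 2 * Q ^ 2) = 1 / (4 * q ^ 2 * Q ^ 2) := by ring
    nlinarith
  linarith [(le_abs_self (r + c)).trans (Real.abs_le_sqrt hsq)]

theorem yoccoz_disk_far_from_alpha_general (α₀ : ℝ) (hirr : Irrational α₀) (n : ℕ)
    (p' q' : ℤ) (hq' : 0 < q')
    (hlt : q' < qSeq α₀ n) (α : ℂ)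
    (hα : α ∈ Metric.ball (((p' : ℂ) / (q' : ℂ)) +
            (Real.log 2 / (2 * Real.pi * (q' : ℝ)) : ℝ) * Complex.I)
            (Real.log 2 / (2 * Real.pi * (q' : ℝ))) ∪
          Metric.ball (((p' : ℂ) / (q' : ℂ)) -
            (Real.log 2 / (2 * Real.pi * (q' : ℝ)) : ℝ) * Complex.I)
            (Real.log 2 / (2 * Real.pi * (q' : ℝ)))) :
    1 / (2 * (qSeq α₀ n : ℝ) ^ 3) ≤ ‖α - (α₀ : ℂ)‖ := by
  obtain ⟨m, rfl⟩ : ∃ m, n = m + 1 :=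
    Nat.exists_eq_succ_of_ne_zero (by rintro rfl; simp only [qSeq] at hlt; omega)
  have hq : (1 : ℝ) ≤ q' := by exact_mod_cast hq'
  have hqQ : (q' : ℝ) + 1 ≤ qSeq α₀ (m + 1) := by exact_mod_cast hlt
  have hx : 1 / (2 * q' * qSeq α₀ (m + 1) : ℝ) ≤ |(p' / q' : ℝ) - α₀| := by
    have hbest := (one_div_two_qSeq_succ_le_abs_dSeq hirr m).trans
      (abs_dSeq_le_abs_mul_sub hirr (p := p') hq' hlt)
    have hdiv : (p' / q' : ℝ) - α₀ = -((q' * α₀ - p') / q') := by field_simp; ring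
    rw [hdiv, abs_neg, abs_div, abs_of_pos (by linarith : (0 : ℝ) < q'), le_div_iff₀ (by linarith)]
    calc 1 / (2 * q' * qSeq α₀ (m + 1) : ℝ) * q' = 1 / (2 * qSeq α₀ (m + 1)) := by
          field_simp
      _ ≤ |q' * α₀ - p'| := hbest
  set r := Real.log 2 / (2 * Real.pi * q')
  have hα' : α ∈ ball ((p' / q' : ℝ) + r * I) r ∪ ball ((p' / q' : ℝ) - r * I) r := by
    push_cast; exact hα
  exact (one_div_two_cube_le_sqrt_sub hq hqQ (log_two_div_two_pi_mul_le (by linarith)) hx).trans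
    (sqrt_sq_add_sq_sub_le_norm_sub hα' α₀)

/-- Let `α₀` be irrational with convergent denominator `q_n ≥ 2`, and let `p'/q'` be a rational
in lowest terms with `0 < q' < q_n`. If a complex number `α` lies in the open disk of radius
`ρ = (log 2)/(2π q')` tangent to the real axis at `p'/q'` (from either side), then
`|α − α₀| ≥ 1/(2 q_n³)`. -/
theorem yoccoz_disk_far_from_alpha (α₀ : ℝ) (hirr : Irrational α₀) (n : ℕ)
    (hqn : 2 ≤ qSeq α₀ n) (p' q' : ℤ) (hq' : 0 < q') (hcop : Int.gcd p' q' = 1)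
    (hlt : q' < qSeq α₀ n) (α : ℂ)
    (hα : α ∈ Metric.ball (((p' : ℂ) / (q' : ℂ)) +
            (Real.log 2 / (2 * Real.pi * (q' : ℝ)) : ℝ) * Complex.I)
            (Real.log 2 / (2 * Real.pi * (q' : ℝ))) ∪
          Metric.ball (((p' : ℂ) / (q' : ℂ)) -
            (Real.log 2 / (2 * Real.pi * (q' : ℝ)) : ℝ) * Complex.I)
            (Real.log 2 / (2 * Real.pi * (q' : ℝ)))) :
    1 / (2 * (qSeq α₀ n : ℝ) ^ 3) ≤ ‖α - (α₀ : ℂ)‖ :=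
  yoccoz_disk_far_from_alpha_general α₀ hirr n p' q' hq' hlt α hα
end

section
/- Let δ ∈ (0, 1/10) and α ∈ (0,1). Then for all r ∈ (0,1): the hyperbolic distance in the punctured disk B(0,e)∖{0} between α and any point z with |z − α| > δα is at least δ/(2 log(e/α)). Equivalently: if the hyperbolic distance d_{B(0,e)∖{0}}(α, z) ≤ δ/(2 log(e/α)), then |z − α| ≤ δα. -/
open Set

/-- The punctured disk `B(0,e) ∖ {0}` in `ℂ`. -/
def punctDisk : Set ℂ := {z : ℂ | z ≠ 0 ∧ ‖z‖ < Real.exp 1}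

/-- The density of the hyperbolic metric of the punctured disk `B(0,e) ∖ {0}`:
`ρ(z) = 1/(|z| log(e/|z|))`. -/
noncomputable def punctDensity (z : ℂ) : ℝ :=
  1 / (‖z‖ * Real.log (Real.exp 1 / ‖z‖))

/-- The hyperbolic distance in `B(0,e) ∖ {0}`: the infimum of hyperbolic lengths of `C¹`
paths joining the two points inside the punctured disk. -/
noncomputable def punctHypDist (a b : ℂ) : ℝ :=
  sInf {L : ℝ | ∃ γ : ℝ → ℂ, γ 0 = a ∧ γ 1 = b ∧
    (∀ t ∈ Icc (0 : ℝ) 1, γ t ∈ punctDisk) ∧ ContDiffOn ℝ 1 γ (Icc (0 : ℝ) 1) ∧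
    L = ∫ t in (0 : ℝ)..1, punctDensity (γ t) * ‖deriv γ t‖}

/-!
A path from `α` to `z` with `|z - α| > δα` must leave the closed ball of radius
`r = min α |z - α| > δα` about `α`. Up to its first exit it stays where `|w| ≤ 2α`, and there the
density `1 / (|w| log (e / |w|))` is at least `1 / (2α log (e / α))`, so every such path has
hyperbolic length at least `r / (2α log (e / α)) > δ / (2 log (e / α))`.
-/

open MeasureTheory Real

theorem exists_first_eq_of_le_of_le {f : ℝ → ℝ} {a b r : ℝ} (hab : a ≤ b)
    (hf : ContinuousOn f (Icc a b)) (ha : f a ≤ r) (hb : r ≤ f b) :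
    ∃ T ∈ Icc a b, f T = r ∧ ∀ t ∈ Icc a T, f t ≤ r := by
  set K := Icc a b ∩ f ⁻¹' {r}
  have hK : IsClosed K := hf.preimage_isClosed_of_isClosed isClosed_Icc isClosed_singleton
  have hKne : K.Nonempty := by
    obtain ⟨s, hs, hfs⟩ := intermediate_value_Icc hab hf ⟨ha, hb⟩
    exact ⟨s, hs, hfs⟩
  have hKbdd : BddBelow K := ⟨a, fun t ht => ht.1.1⟩
  obtain ⟨hT, hfT⟩ := hK.csInf_mem hKne hKbdd
  refine ⟨sInf K, hT, hfT, fun t ht => ?_⟩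
  by_contra! hrt
  obtain ⟨s, hs, hfs⟩ := intermediate_value_Icc ht.1 (hf.mono (Icc_subset_Icc_right
    (ht.2.trans hT.2))) ⟨ha, hrt.le⟩
  have hsK : s ∈ K := ⟨⟨hs.1, hs.2.trans (ht.2.trans hT.2)⟩, hfs⟩
  have hst : s = t := le_antisymm hs.2 (ht.2.trans (csInf_le hKbdd hsK))
  exact hrt.ne' (hst ▸ hfs)

variable {E : Type*} [NormedAddCommGroup E] [NormedSpace ℝ E]

theorem ContDiffOn.intervalIntegrable_deriv {γ : ℝ → E} {a b : ℝ} (hab : a ≤ b)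
    (hγ : ContDiffOn ℝ 1 γ (Icc a b)) : IntervalIntegrable (deriv γ) volume a b := by
  rcases hab.eq_or_lt with rfl | hab
  · exact .refl
  rw [intervalIntegrable_iff_integrableOn_Ioo_of_le hab.le]
  have hcont := hγ.continuousOn_derivWithin (uniqueDiffOn_Icc hab) le_rfl
  exact (hcont.integrableOn_Icc.mono_set Ioo_subset_Icc_self).congr_fun
    (fun t ht => derivWithin_of_mem_nhds (Icc_mem_nhds ht.1 ht.2)) measurableSet_Ioo

theorem mul_le_integral_mul_norm_deriv {γ : ℝ → E} {ρ : ℝ → ℝ} {a b m r : ℝ} (hab : a ≤ b)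
    (hγ : ContDiffOn ℝ 1 γ (Icc a b)) (hρ : ContinuousOn ρ (Icc a b))
    (hρ_nonneg : ∀ t ∈ Icc a b, 0 ≤ ρ t) (hρ_ball : ∀ t ∈ Icc a b, ‖γ t - γ a‖ ≤ r → m ≤ ρ t)
    (hm : 0 ≤ m) (hr : 0 ≤ r) (hrb : r ≤ ‖γ b - γ a‖) :
    m * r ≤ ∫ t in a..b, ρ t * ‖deriv γ t‖ := by
  obtain ⟨T, hT, hTr, hbefore⟩ := exists_first_eq_of_le_of_le (f := fun t => ‖γ t - γ a‖) hab
    ((hγ.continuousOn.sub continuousOn_const).norm) (by simpa using hr) hrb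
  have hsub : Icc a T ⊆ Icc a b := Icc_subset_Icc_right hT.2
  have hint : IntervalIntegrable (fun t => ρ t * ‖deriv γ t‖) volume a b :=
    (hγ.intervalIntegrable_deriv hab).norm.continuousOn_mul (by rwa [uIcc_of_le hab])
  have hintT := (hγ.mono hsub).intervalIntegrable_deriv hT.1
  calc m * r = m * ‖γ T - γ a‖ := by rw [hTr]
    _ ≤ m * ∫ t in a..T, ‖deriv γ t‖ := by
      gcongr
      exact norm_sub_le_integral_of_norm_deriv_le_of_le hT.1 (hγ.continuousOn.mono hsub)
        ((hγ.differentiableOn one_ne_zero).mono (Ioo_subset_Icc_self.trans hsub))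
        (ae_of_all _ fun _ _ => le_rfl) hintT.norm
    _ = ∫ t in a..T, m * ‖deriv γ t‖ := (intervalIntegral.integral_const_mul _ _).symm
    _ ≤ ∫ t in a..T, ρ t * ‖deriv γ t‖ :=
      intervalIntegral.integral_mono_on hT.1 (hintT.norm.const_mul m)
        (hint.mono_set (by simpa [uIcc_of_le hab, uIcc_of_le hT.1] using hsub))
        fun t ht => by gcongr; exact hρ_ball t (hsub ht) (hbefore t ht)
    _ ≤ ∫ t in a..b, ρ t * ‖deriv γ t‖ :=
      intervalIntegral.integral_mono_interval le_rfl hT.1 hT.2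
        (ae_restrict_of_forall_mem measurableSet_Ioc fun t ht =>
          mul_nonneg (hρ_nonneg t (Ioc_subset_Icc_self ht)) (norm_nonneg _)) hint

theorem log_exp_one_div {x : ℝ} (hx : 0 < x) : log (exp 1 / x) = 1 - log x := by
  rw [log_div (exp_ne_zero 1) hx.ne', log_exp]

theorem log_exp_one_div_pos {x : ℝ} (hx : 0 < x) (hxe : x < exp 1) : 0 < log (exp 1 / x) :=
  log_pos ((one_lt_div hx).mpr hxe)

-- the tangent line of the concave function `x ↦ x log (e / x)` at `y` lies above it
theorem mul_log_exp_one_div_le {x y c : ℝ} (hx : 0 < x) (hy : 0 < y) (hy1 : y ≤ 1) (hc : 1 ≤ c)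
    (hxy : x ≤ c * y) : x * log (exp 1 / x) ≤ c * y * log (exp 1 / y) := by
  have htangent : x * log (y / x) ≤ y - x := by
    have := mul_le_mul_of_nonneg_left (log_le_sub_one_of_pos (div_pos hy hx)) hx.le
    rwa [mul_sub, mul_div_cancel₀ _ hx.ne', mul_one] at this
  have hlogy : log y ≤ 0 := log_nonpos hy.le hy1
  rw [log_div hy.ne' hx.ne'] at htangent
  rw [log_exp_one_div hx, log_exp_one_div hy]
  nlinarith

namespace punctDisk

theorem norm_pos {w : ℂ} (hw : w ∈ punctDisk) : 0 < ‖w‖ := norm_pos_iff.mpr hw.1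

theorem punctDensity_pos {w : ℂ} (hw : w ∈ punctDisk) : 0 < punctDensity w :=
  one_div_pos.mpr (mul_pos (norm_pos hw) (log_exp_one_div_pos (norm_pos hw) hw.2))

theorem continuousOn_punctDensity : ContinuousOn punctDensity punctDisk := by
  intro w hw
  have hw0 : ‖w‖ ≠ 0 := (norm_pos hw).ne'
  refine ContinuousAt.continuousWithinAt ?_
  have hlog : ContinuousAt (fun v : ℂ => log (exp 1 / ‖v‖)) w :=
    (continuousAt_const.div continuous_norm.continuousAt hw0).log
      (div_ne_zero (exp_ne_zero 1) hw0)
  exact continuousAt_const.div (continuous_norm.continuousAt.mul hlog)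
    (mul_pos (norm_pos hw) (log_exp_one_div_pos (norm_pos hw) hw.2)).ne'

theorem one_div_le_punctDensity {w : ℂ} {y c : ℝ} (hw : w ∈ punctDisk) (hy : 0 < y) (hy1 : y ≤ 1)
    (hc : 1 ≤ c) (hwy : ‖w‖ ≤ c * y) : 1 / (c * y * log (exp 1 / y)) ≤ punctDensity w :=
  one_div_le_one_div_of_le (mul_pos (norm_pos hw) (log_exp_one_div_pos (norm_pos hw) hw.2))
    (mul_log_exp_one_div_le (norm_pos hw) hy hy1 hc hwy)

-- interpolate modulus and argument linearly
theorem exists_path {a b : ℂ} (ha : a ∈ punctDisk) (hb : b ∈ punctDisk) :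
    ∃ γ : ℝ → ℂ, γ 0 = a ∧ γ 1 = b ∧ (∀ t ∈ Icc (0 : ℝ) 1, γ t ∈ punctDisk) ∧
      ContDiff ℝ 1 γ := by
  set R : ℝ → ℝ := fun t => (1 - t) * ‖a‖ + t * ‖b‖
  set θ : ℝ → ℝ := fun t => (1 - t) * a.arg + t * b.arg
  have hR : ∀ t ∈ Icc (0 : ℝ) 1, R t ∈ Ioo 0 (exp 1) := fun t ht =>
    convex_Ioo 0 (exp 1) ⟨norm_pos ha, ha.2⟩ ⟨norm_pos hb, hb.2⟩ (sub_nonneg.mpr ht.2) ht.1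
      (by ring)
  have hofReal : ContDiff ℝ 1 ((↑) : ℝ → ℂ) := Complex.ofRealCLM.contDiff
  refine ⟨fun t => R t * Complex.exp (θ t * Complex.I), ?_, ?_, fun t ht => ?_, by fun_prop⟩
  · simp [R, θ, Complex.norm_mul_exp_arg_mul_I]
  · simp [R, θ, Complex.norm_mul_exp_arg_mul_I]
  · have hnorm : ‖(R t : ℂ) * Complex.exp (θ t * Complex.I)‖ = R t := by
      rw [norm_mul, Complex.norm_exp_ofReal_mul_I, mul_one, Complex.norm_real, Real.norm_eq_abs,
        abs_of_pos (hR t ht).1]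
    exact ⟨norm_ne_zero_iff.mp (hnorm ▸ (hR t ht).1.ne'), hnorm ▸ (hR t ht).2⟩

end punctDisk

theorem ofReal_mem_punctDisk {x : ℝ} (hx : x ∈ Ioc (0 : ℝ) 1) : (x : ℂ) ∈ punctDisk :=
  ⟨Complex.ofReal_ne_zero.mpr hx.1.ne', by
    rw [Complex.norm_real, Real.norm_eq_abs, abs_of_pos hx.1]
    exact hx.2.trans_lt (one_lt_exp_iff.mpr one_pos)⟩

theorem le_punctHypDist {a b : ℂ} {L₀ : ℝ} (ha : a ∈ punctDisk) (hb : b ∈ punctDisk)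
    (h : ∀ γ : ℝ → ℂ, γ 0 = a → γ 1 = b → (∀ t ∈ Icc (0 : ℝ) 1, γ t ∈ punctDisk) →
      ContDiffOn ℝ 1 γ (Icc (0 : ℝ) 1) → L₀ ≤ ∫ t in (0 : ℝ)..1, punctDensity (γ t) * ‖deriv γ t‖) :
    L₀ ≤ punctHypDist a b := by
  obtain ⟨γ, h0, h1, hmem, hγ⟩ := punctDisk.exists_path ha hb
  refine le_csInf ⟨_, γ, h0, h1, hmem, hγ.contDiffOn, rfl⟩ ?_
  rintro _ ⟨γ, h0, h1, hmem, hγ, rfl⟩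
  exact h γ h0 h1 hmem hγ

theorem div_le_punctHypDist {α r : ℝ} {z : ℂ} (hα : α ∈ Ioc (0 : ℝ) 1) (hz : z ∈ punctDisk)
    (hr : 0 ≤ r) (hrα : r ≤ α) (hrz : r ≤ ‖z - α‖) :
    r / (2 * α * log (exp 1 / α)) ≤ punctHypDist α z := by
  refine le_punctHypDist (ofReal_mem_punctDisk hα) hz fun γ h0 h1 hmem hγ => ?_
  have hnear : ∀ t ∈ Icc (0 : ℝ) 1, ‖γ t - γ 0‖ ≤ r → ‖γ t‖ ≤ 2 * α := fun t _ ht => by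
    have := norm_le_norm_sub_add (γ t) (γ 0)
    rw [h0, Complex.norm_real, Real.norm_eq_abs, abs_of_pos hα.1] at this
    rw [h0] at ht
    linarith
  rw [div_eq_inv_mul, ← one_div]
  exact mul_le_integral_mul_norm_deriv zero_le_one hγ
    (punctDisk.continuousOn_punctDensity.comp hγ.continuousOn hmem)
    (fun t ht => (punctDisk.punctDensity_pos (hmem t ht)).le)
    (fun t ht hball => punctDisk.one_div_le_punctDensity (hmem t ht) hα.1 hα.2 one_le_two
      (hnear t ht hball))
    (one_div_nonneg.mpr (mul_pos (mul_pos two_pos hα.1) (log_exp_one_div_pos hα.1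
      (hα.2.trans_lt (one_lt_exp_iff.mpr one_pos)))).le) hr (by rwa [h0, h1])

/-- For `δ ∈ (0,1/10)` and `α ∈ (0,1)`: any point `z` of the punctured disk `B(0,e) ∖ {0}`
at hyperbolic distance at most `δ/(2 log(e/α))` from `α` satisfies `|z − α| ≤ δα`. -/
theorem hyp_dist_close_implies_euclid_close (δ α : ℝ) (hδ : δ ∈ Ioo (0 : ℝ) (1 / 10))
    (hα : α ∈ Ioo (0 : ℝ) 1) (z : ℂ) (hz : z ∈ punctDisk)
    (h : punctHypDist (α : ℂ) z ≤ δ / (2 * Real.log (Real.exp 1 / α))) :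
    ‖z - (α : ℂ)‖ ≤ δ * α := by
  by_contra! hfar
  have hlog : 0 < log (exp 1 / α) :=
    log_exp_one_div_pos hα.1 (hα.2.trans (one_lt_exp_iff.mpr one_pos))
  have hδα : δ * α < min α ‖z - α‖ :=
    lt_min (mul_lt_of_lt_one_left hα.1 (hδ.2.trans (by norm_num))) hfar
  have hdist := div_le_punctHypDist (r := min α ‖z - α‖) (Ioo_subset_Ioc_self hα) hz
    (le_min hα.1.le (norm_nonneg _)) (min_le_left _ _) (min_le_right _ _)
  have hscale : δ / (2 * log (exp 1 / α)) = δ * α / (2 * α * log (exp 1 / α)) := by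
    field_simp [hα.1.ne']
  have hgap := div_lt_div_of_pos_right hδα (mul_pos (mul_pos two_pos hα.1) hlog)
  linarith
end

section
/- For 0 < r < 1/2, the density ρ of the hyperbolic metric on 𝔻∖{r} at a point z with |z| ≤ r/10 satisfies ρ(z) ≤ 12/(r·log(e/r)). -/
/-!
Near `0` both factors of the density are under control: `|1 − rz| ≥ 39/40` and
`9r/10 ≤ |z − r| ≤ 11r/10`, so `log(|1 − rz|/|z − r|) ≥ log(39/44) + log(1/r)`. The bound then
reduces to an inequality in `r` alone, which holds with room to spare since `log(1/r) ≥ log 2`.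
-/

open Real

lemma norm_sub_ofReal_mem_Icc {r : ℝ} (hr0 : 0 ≤ r) {z : ℂ} (hz : ‖z‖ ≤ r / 10) :
    ‖z - r‖ ∈ Set.Icc (9 * r / 10) (11 * r / 10) := by
  have hr : ‖(r : ℂ)‖ = r := Complex.norm_of_nonneg hr0
  constructor
  · have := norm_sub_norm_le (r : ℂ) z
    rw [hr, norm_sub_rev] at this
    linarith
  · have := norm_sub_le z (r : ℂ)
    rw [hr] at this
    linarith

lemma le_norm_one_sub_ofReal_mul {r : ℝ} (hr0 : 0 ≤ r) (hr : r ≤ 1 / 2) {z : ℂ}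
    (hz : ‖z‖ ≤ r / 10) : 39 / 40 ≤ ‖1 - r * z‖ := by
  have h := norm_sub_norm_le (1 : ℂ) (r * z)
  rw [norm_one, norm_mul, Complex.norm_of_nonneg hr0] at h
  nlinarith [mul_le_mul_of_nonneg_left hz hr0]

lemma one_sub_sq_div_le_twelve_div {r : ℝ} (hr0 : 0 < r) (hr : r ≤ 1 / 2) :
    (1 - r ^ 2) / (39 / 40 * (9 * r / 10) * log (39 / (44 * r))) ≤
      12 / (r * log (exp 1 / r)) := by
  have hlog2 : (0.6931471803 : ℝ) < log 2 := log_two_gt_d9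
  have hlogr : log r ≤ -log 2 := by
    simpa [log_inv] using log_le_log hr0 (hr.trans_eq (one_div 2))
  have hlog3944 : -(5 / 39) ≤ log (39 / 44 : ℝ) := by
    have := one_sub_inv_le_log_of_pos (show (0 : ℝ) < 39 / 44 by norm_num)
    norm_num at this ⊢
    linarith
  rw [log_div (exp_ne_zero 1) hr0.ne', log_exp, ← div_div (39 : ℝ) 44 r,
    log_div (by norm_num) hr0.ne', div_le_div_iff₀ (by nlinarith) (by nlinarith)]
  have hcube : 0 ≤ r ^ 3 * (1 - log r) := mul_nonneg (by positivity) (by linarith)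
  nlinarith [mul_le_mul_of_nonneg_left hlogr hr0.le, mul_le_mul_of_nonneg_left hlog3944 hr0.le,
    mul_lt_mul_of_pos_left hlog2 hr0]

/-- For `0 < r < 1/2`, the density of the hyperbolic metric on `𝔻 ∖ {r}`,
`ρ(z) = (1 − r²)/(|1 − rz|·|z − r|·log(|1 − rz|/|z − r|))`, satisfies
`ρ(z) ≤ 12/(r log(e/r))` at every point `z` with `|z| ≤ r/10`. -/
theorem punctured_disk_density_bound (r : ℝ) (hr0 : 0 < r) (hr : r < 1 / 2) (z : ℂ)
    (hz : ‖z‖ ≤ r / 10) :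
    (1 - r ^ 2) /
        (‖1 - (r : ℂ) * z‖ * ‖z - (r : ℂ)‖ *
          Real.log (‖1 - (r : ℂ) * z‖ / ‖z - (r : ℂ)‖)) ≤
      12 / (r * Real.log (Real.exp 1 / r)) := by
  have hA := le_norm_one_sub_ofReal_mul hr0.le hr.le hz
  obtain ⟨hB, hB'⟩ := norm_sub_ofReal_mem_Icc hr0.le hz
  have hlog_pos : 0 < log (39 / (44 * r)) :=
    log_pos (by rw [lt_div_iff₀ (by positivity)]; linarith)
  have hlog : log (39 / (44 * r)) ≤ log (‖1 - r * z‖ / ‖z - r‖) := by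
    refine log_le_log (by positivity) ?_
    rw [div_le_div_iff₀ (by positivity) (by linarith)]
    nlinarith
  calc _ ≤ (1 - r ^ 2) / (39 / 40 * (9 * r / 10) * log (39 / (44 * r))) := by
        refine div_le_div_of_nonneg_left (by nlinarith) (by positivity) ?_
        gcongr
    _ ≤ _ := one_sub_sq_div_le_twelve_div hr0 hr.le
end

section
/- Let p/q ∈ ℚ (in lowest terms) and suppose the q-th iterate of the quadratic polynomial P_{p/q}(z) = e^{2πi p/q} z + z² has expansion P_{p/q}^{∘q}(z) = z + A z^{q+1} + O(z^{q+2}) with A ≠ 0. For real ε near 0, let z_ε be any point of the exploding q-cycle of P_{p/q+ε} (so z_ε → 0 and P_{p/q+ε}^{∘q}(z_ε) = z_ε). Then z_ε^q = (1 − e^{2πi q ε})/A · (1 + O(z_ε)), hence z_ε = O(ε^{1/q}) and log|z_ε| = (1/q)·log|2π q ε / A| + O(ε^{1/q}). -/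
open Filter Complex

noncomputable def Pquad (α : ℝ) (z : ℂ) : ℂ :=
  Complex.exp (2 * (Real.pi : ℂ) * Complex.I * (α : ℂ)) * z + z ^ 2

/-! Write `x = 2πiqε`, so that the multiplier of the cycle is `e^x`. Dividing the fixed-point
equation `P^{∘q}(z) = z` by `z` gives `A z^q + e^x - 1 = O(x z)`, and since
`e^x - 1 = x (1 + O(x))`, dividing by `1 - e^x` gives `z^q A / (1 - e^x) = 1 + O(z)`.
Hence `|z|^q = O(|x|)`, i.e. `z = O(|x|^{1/q})`, and
`q log|z| - log(|x|/|A|) = log|z^q A / (1 - e^x)| + log|(e^x - 1)/x| = O(z) + O(x)`,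
both terms being `O(|x|^{1/q})`. -/

open Asymptotics Topology

section

variable {α : Type*} {l : Filter α}

theorem isBigO_exp_sub_one_div_sub_one {x : α → ℂ} (hx : Tendsto x l (𝓝 0))
    (hx0 : ∀ᶠ a in l, x a ≠ 0) :
    (fun a => (exp (x a) - 1) / x a - 1) =O[l] x := by
  refine IsBigO.of_bound 1 ?_
  filter_upwards [hx0, (tendsto_norm_zero.comp hx).eventually (ge_mem_nhds one_pos)] with a ha ha1
  calc ‖(exp (x a) - 1) / x a - 1‖ = ‖exp (x a) - 1 - x a‖ / ‖x a‖ := by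
        rw [div_sub_one ha, norm_div]
    _ ≤ ‖x a‖ ^ 2 / ‖x a‖ := by gcongr; exact norm_exp_sub_one_sub_id_le ha1
    _ = 1 * ‖x a‖ := by field_simp

theorem tendsto_exp_sub_one_div {x : α → ℂ} (hx : Tendsto x l (𝓝 0))
    (hx0 : ∀ᶠ a in l, x a ≠ 0) :
    Tendsto (fun a => (exp (x a) - 1) / x a) l (𝓝 1) :=
  tendsto_sub_nhds_zero_iff.mp ((isBigO_exp_sub_one_div_sub_one hx hx0).trans_tendsto hx)

theorem eventually_exp_ne_one {x : α → ℂ} (hx : Tendsto x l (𝓝 0))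
    (hx0 : ∀ᶠ a in l, x a ≠ 0) : ∀ᶠ a in l, exp (x a) ≠ 1 := by
  filter_upwards [(tendsto_exp_sub_one_div hx hx0).eventually_ne one_ne_zero] with a hs
  exact sub_ne_zero.mp (div_ne_zero_iff.mp hs).1

theorem isBigO_one_sub_exp {x : α → ℂ} (hx : Tendsto x l (𝓝 0)) :
    (fun a => 1 - exp (x a)) =O[l] x := by
  refine IsBigO.of_bound 2 ?_
  filter_upwards [(tendsto_norm_zero.comp hx).eventually (ge_mem_nhds one_pos)] with a ha1
  rw [norm_sub_rev]
  exact norm_exp_sub_one_le ha1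

theorem isBigO_log_norm_of_tendsto_one {E : Type*} [SeminormedRing E] [NormOneClass E]
    {f : α → E} (hf : Tendsto f l (𝓝 1)) :
    (fun a => Real.log ‖f a‖) =O[l] fun a => f a - 1 := by
  have hlog : (fun t : ℝ => Real.log t) =O[𝓝 1] fun t => t - 1 := by
    simpa using (Real.hasDerivAt_log one_ne_zero).isBigO_sub
  have hnorm : Tendsto (fun a => ‖f a‖) l (𝓝 1) := by simpa using hf.norm
  refine (hlog.comp_tendsto hnorm).trans (IsBigO.of_bound 1 (Eventually.of_forall fun a => ?_))
  simpa [Real.norm_eq_abs] using abs_norm_sub_norm_le (f a) 1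

theorem isBigO_norm_rpow_of_tendsto_zero {E : Type*} [SeminormedAddCommGroup E] {f : α → E}
    {r : ℝ} (hr0 : 0 ≤ r) (hr1 : r ≤ 1) (hf : Tendsto f l (𝓝 0)) :
    f =O[l] fun a => ‖f a‖ ^ r := by
  refine IsBigO.of_bound 1 ?_
  filter_upwards [(tendsto_norm_zero.comp hf).eventually (ge_mem_nhds one_pos)] with a ha
  rw [Real.norm_of_nonneg (by positivity), one_mul]
  simpa using Real.rpow_le_rpow_of_exponent_ge' (norm_nonneg _) ha hr0 hr1

theorem norm_mul_pow_add_sub_one_le_of_isFixedPt {𝕜 : Type*} [NormedField 𝕜] {F : 𝕜 → 𝕜}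
    {e A w : 𝕜} {q : ℕ} {K : ℝ} (hF : ‖F w - e * w - A * w ^ (q + 1)‖ ≤ K * ‖w‖ ^ 2)
    (hw : Function.IsFixedPt F w) (hw0 : w ≠ 0) :
    ‖A * w ^ q + e - 1‖ ≤ K * ‖w‖ := by
  have hfactor : F w - e * w - A * w ^ (q + 1) = -(w * (A * w ^ q + e - 1)) := by
    rw [hw.eq]; ring
  rw [hfactor, norm_neg, norm_mul] at hF
  refine le_of_mul_le_mul_left ?_ (norm_pos_iff.mpr hw0)
  linarith

variable {x w : α → ℂ} {A : ℂ} {q : ℕ}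

theorem isBigO_pow_mul_div_one_sub_exp_sub_one (hx : Tendsto x l (𝓝 0))
    (hx0 : ∀ᶠ a in l, x a ≠ 0)
    (hw : (fun a => A * w a ^ q + exp (x a) - 1) =O[l] fun a => x a * w a) :
    (fun a => w a ^ q * A / (1 - exp (x a)) - 1) =O[l] w := by
  have hs := tendsto_exp_sub_one_div hx hx0
  have hquot : (fun a => (A * w a ^ q + exp (x a) - 1) * (exp (x a) - 1)⁻¹) =O[l]
      fun a => w a * ((exp (x a) - 1) / x a)⁻¹ := by
    refine (hw.mul (isBigO_refl (fun a => (exp (x a) - 1)⁻¹) l)).congr' .rfl ?_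
    filter_upwards [hx0] with a ha
    rw [inv_div]; ring
  have hbdd : (fun a => w a * ((exp (x a) - 1) / x a)⁻¹) =O[l] w := by
    simpa using (isBigO_refl w l).mul ((hs.inv₀ one_ne_zero).isBigO_one ℂ)
  refine (hquot.trans hbdd).neg_left.congr' ?_ .rfl
  filter_upwards [eventually_exp_ne_one hx hx0] with a ha
  have : exp (x a) - 1 ≠ 0 := sub_ne_zero.mpr ha
  have : 1 - exp (x a) ≠ 0 := sub_ne_zero.mpr ha.symm
  field_simp
  ring

theorem isBigO_norm_rpow_of_pow_mul_div_one_sub_exp (hx : Tendsto x l (𝓝 0))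
    (hx0 : ∀ᶠ a in l, x a ≠ 0) (hA : A ≠ 0) (hq : q ≠ 0) (hw0 : Tendsto w l (𝓝 0))
    (hu : (fun a => w a ^ q * A / (1 - exp (x a)) - 1) =O[l] w) :
    w =O[l] fun a => ‖x a‖ ^ ((1 : ℝ) / q) := by
  have hu1 : Tendsto (fun a => w a ^ q * A / (1 - exp (x a))) l (𝓝 1) :=
    tendsto_sub_nhds_zero_iff.mp (hu.trans_tendsto hw0)
  have hpow : (fun a => w a ^ q) =O[l] x := by
    refine ((isBigO_one_sub_exp hx).mul ((hu1.div_const A).isBigO_one ℂ)).congr' ?_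
      (.of_eq (by simp))
    filter_upwards [eventually_exp_ne_one hx hx0] with a ha
    have : 1 - exp (x a) ≠ 0 := sub_ne_zero.mpr ha.symm
    field_simp
  have hnorm : x =O[l] fun a => (‖x a‖ ^ ((1 : ℝ) / q)) ^ q := by
    simpa [Real.rpow_inv_natCast_pow (norm_nonneg _) hq] using (isBigO_refl x l).norm_right
  exact IsBigO.of_pow hq (hpow.trans hnorm)

theorem isBigO_log_norm_sub_log_norm_div (hx : Tendsto x l (𝓝 0))
    (hx0 : ∀ᶠ a in l, x a ≠ 0) (hA : A ≠ 0) (hq : q ≠ 0) (hw0 : Tendsto w l (𝓝 0))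
    (hwne : ∀ᶠ a in l, w a ≠ 0)
    (hu : (fun a => w a ^ q * A / (1 - exp (x a)) - 1) =O[l] w)
    (hwx : w =O[l] fun a => ‖x a‖ ^ ((1 : ℝ) / q)) :
    (fun a => Real.log ‖w a‖ - 1 / (q : ℝ) * Real.log (‖x a‖ / ‖A‖)) =O[l]
      fun a => ‖x a‖ ^ ((1 : ℝ) / q) := by
  have hu1 : Tendsto (fun a => w a ^ q * A / (1 - exp (x a))) l (𝓝 1) :=
    tendsto_sub_nhds_zero_iff.mp (hu.trans_tendsto hw0)
  have hlogu := (isBigO_log_norm_of_tendsto_one hu1).trans (hu.trans hwx)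
  have hq1 : (1 : ℝ) / q ≤ 1 :=
    div_le_one_of_le₀ (by exact_mod_cast Nat.one_le_iff_ne_zero.mpr hq) (by positivity)
  have hlogs := (isBigO_log_norm_of_tendsto_one (tendsto_exp_sub_one_div hx hx0)).trans
    ((isBigO_exp_sub_one_div_sub_one hx hx0).trans
      (isBigO_norm_rpow_of_tendsto_zero (by positivity) hq1 hx))
  refine ((hlogu.add hlogs).const_mul_left (1 / (q : ℝ))).congr' ?_ .rfl
  filter_upwards [hx0, hwne, eventually_exp_ne_one hx hx0] with a hxa hwa hea
  have he : ‖1 - exp (x a)‖ ≠ 0 := norm_ne_zero_iff.mpr (sub_ne_zero.mpr hea.symm)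
  have hx' : ‖x a‖ ≠ 0 := norm_ne_zero_iff.mpr hxa
  have hw' : ‖w a‖ ≠ 0 := norm_ne_zero_iff.mpr hwa
  have hA' : ‖A‖ ≠ 0 := norm_ne_zero_iff.mpr hA
  simp only [norm_div, norm_mul, norm_pow, norm_sub_rev (exp (x a)) 1]
  rw [Real.log_div (mul_ne_zero (pow_ne_zero _ hw') hA') he, Real.log_div he hx',
    Real.log_mul (pow_ne_zero _ hw') hA', Real.log_pow, Real.log_div hx' hA']
  field_simp
  ring

end

theorem exploding_cycle_asymptotics_general (p : ℤ) (q : ℕ) (hq : 1 ≤ q)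
    (A : ℂ) (hA : A ≠ 0)
    (hExp2 : ∃ C > (0 : ℝ), ∃ ρ > (0 : ℝ), ∀ (ε : ℝ) (z : ℂ), |ε| < ρ → ‖z‖ < ρ →
      ‖((Pquad ((p : ℝ) / (q : ℝ) + ε))^[q] z -
          Complex.exp (2 * (Real.pi : ℂ) * Complex.I * ((q : ℂ) * (ε : ℂ))) * z -
          A * z ^ (q + 1))‖ ≤ C * |ε| * ‖z‖ ^ 2)
    (z : ℝ → ℂ)
    (hz0 : Tendsto z (nhdsWithin (0 : ℝ) {0}ᶜ) (nhds 0))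
    (hzne : ∀ᶠ ε in nhdsWithin (0 : ℝ) {0}ᶜ, z ε ≠ 0)
    (hper : ∀ᶠ ε in nhdsWithin (0 : ℝ) {0}ᶜ,
      (Pquad ((p : ℝ) / (q : ℝ) + ε))^[q] (z ε) = z ε) :
    ((fun ε : ℝ => (z ε) ^ q * A /
          (1 - Complex.exp (2 * (Real.pi : ℂ) * Complex.I * ((q : ℂ) * (ε : ℂ)))) - 1)
        =O[nhdsWithin (0 : ℝ) {0}ᶜ] z) ∧
    (z =O[nhdsWithin (0 : ℝ) {0}ᶜ] fun ε : ℝ => |ε| ^ ((1 : ℝ) / q)) ∧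
    ((fun ε : ℝ => Real.log (‖z ε‖) -
          (1 / (q : ℝ)) * Real.log (2 * Real.pi * (q : ℝ) * |ε| / ‖A‖))
        =O[nhdsWithin (0 : ℝ) {0}ᶜ] fun ε : ℝ => |ε| ^ ((1 : ℝ) / q)) := by
  obtain ⟨C, -, ρ, hρ, hC⟩ := hExp2
  have hq0 : q ≠ 0 := Nat.one_le_iff_ne_zero.mp hq
  set x : ℝ → ℂ := fun ε => 2 * (Real.pi : ℂ) * Complex.I * ((q : ℂ) * (ε : ℂ))
  have hxnorm (ε : ℝ) : ‖x ε‖ = 2 * Real.pi * q * |ε| := by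
    simp [x, Real.pi_pos.le, mul_assoc]
  have hx : Tendsto x (𝓝[≠] 0) (𝓝 0) :=
    tendsto_nhdsWithin_of_tendsto_nhds ((by fun_prop : Continuous x).tendsto' 0 0 (by simp [x]))
  have hx0 : ∀ᶠ ε in 𝓝[≠] 0, x ε ≠ 0 := by
    filter_upwards [self_mem_nhdsWithin] with ε hε
    simpa [x, Real.pi_ne_zero, hq0] using hε
  have hcycle : (fun ε => A * z ε ^ q + exp (x ε) - 1) =O[𝓝[≠] 0] fun ε => x ε * z ε := by
    refine IsBigO.of_bound (C / (2 * Real.pi * q)) ?_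
    filter_upwards [hzne, hper, (eventually_norm_sub_lt (0 : ℝ) hρ).filter_mono nhdsWithin_le_nhds,
      (tendsto_norm_zero.comp hz0).eventually (gt_mem_nhds hρ)] with ε hzε hperε hε hzρ
    have hb := norm_mul_pow_add_sub_one_le_of_isFixedPt
      (hC ε (z ε) (by simpa using hε) hzρ) hperε hzε
    rw [norm_mul, hxnorm]
    exact hb.trans_eq (by field_simp)
  have hu := isBigO_pow_mul_div_one_sub_exp_sub_one hx hx0 hcycle
  have hzx := isBigO_norm_rpow_of_pow_mul_div_one_sub_exp hx hx0 hA hq0 hz0 hu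
  have hscale : (fun ε => ‖x ε‖ ^ ((1 : ℝ) / q)) =O[𝓝[≠] 0] fun ε => |ε| ^ ((1 : ℝ) / q) := by
    refine IsBigO.rpow (by positivity) (.of_forall fun ε => abs_nonneg ε) ?_
    simpa only [hxnorm] using isBigO_const_mul_self (2 * Real.pi * q) (fun ε : ℝ => |ε|) _
  refine ⟨hu, hzx.trans hscale, ?_⟩
  simpa only [hxnorm] using
    (isBigO_log_norm_sub_log_norm_div hx hx0 hA hq0 hz0 hzne hu hzx).trans hscale

/-- Parabolic explosion asymptotics. Let `p/q` be a rational in lowest terms with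
`P_{p/q}^{∘q}(z) = z + A z^{q+1} + O(z^{q+2})`, `A ≠ 0`, and
`P_{p/q+ε}^{∘q}(z) = e^{2πiqε} z + A z^{q+1} + O(ε z²)`. Let `z_ε → 0` be a point of the
exploding `q`-cycle (`P_{p/q+ε}^{∘q}(z_ε) = z_ε`, `z_ε ≠ 0`). Then
`z_ε^q = (1 − e^{2πiqε})/A · (1 + O(z_ε))`, hence `z_ε = O(ε^{1/q})` and
`log |z_ε| = (1/q) log|2πqε/A| + O(ε^{1/q})`. -/
theorem exploding_cycle_asymptotics (p : ℤ) (q : ℕ) (hq : 1 ≤ q)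
    (hcop : Int.gcd p (q : ℤ) = 1) (A : ℂ) (hA : A ≠ 0)
    (hExp : (fun z : ℂ => (Pquad ((p : ℝ) / (q : ℝ)))^[q] z - z - A * z ^ (q + 1))
      =O[nhds 0] fun z : ℂ => z ^ (q + 2))
    (hExp2 : ∃ C > (0 : ℝ), ∃ ρ > (0 : ℝ), ∀ (ε : ℝ) (z : ℂ), |ε| < ρ → ‖z‖ < ρ →
      ‖((Pquad ((p : ℝ) / (q : ℝ) + ε))^[q] z -
          Complex.exp (2 * (Real.pi : ℂ) * Complex.I * ((q : ℂ) * (ε : ℂ))) * z -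
          A * z ^ (q + 1))‖ ≤ C * |ε| * ‖z‖ ^ 2)
    (z : ℝ → ℂ)
    (hz0 : Tendsto z (nhdsWithin (0 : ℝ) {0}ᶜ) (nhds 0))
    (hzne : ∀ᶠ ε in nhdsWithin (0 : ℝ) {0}ᶜ, z ε ≠ 0)
    (hper : ∀ᶠ ε in nhdsWithin (0 : ℝ) {0}ᶜ,
      (Pquad ((p : ℝ) / (q : ℝ) + ε))^[q] (z ε) = z ε) :
    ((fun ε : ℝ => (z ε) ^ q * A /
          (1 - Complex.exp (2 * (Real.pi : ℂ) * Complex.I * ((q : ℂ) * (ε : ℂ)))) - 1)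
        =O[nhdsWithin (0 : ℝ) {0}ᶜ] z) ∧
    (z =O[nhdsWithin (0 : ℝ) {0}ᶜ] fun ε : ℝ => |ε| ^ ((1 : ℝ) / q)) ∧
    ((fun ε : ℝ => Real.log (‖z ε‖) -
          (1 / (q : ℝ)) * Real.log (2 * Real.pi * (q : ℝ) * |ε| / ‖A‖))
        =O[nhdsWithin (0 : ℝ) {0}ᶜ] fun ε : ℝ => |ε| ^ ((1 : ℝ) / q)) :=
  exploding_cycle_asymptotics_general p q hq A hA hExp2 z hz0 hzne hper
end

section
/- Let F: ℍ → ℂ be holomorphic with F ∘ T = T ∘ F where T(Z) = Z + 1, and suppose F(Z) − Z − α → 0 as Im Z → +∞, with |F(Z) − Z − α| ≤ δα on ℍ. Then in fact |F(Z) − Z − α| ≤ δα·e^{−2π Im Z} for all Z ∈ ℍ. -/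
open Complex Filter Metric Set Function.Periodic

open scoped Real Topology

/-
Proof idea: `u(Z) = F(Z) − Z − α` is 1-periodic, so `u(Z) = g(e^{2πiZ})` for a function `g` on the
punctured unit disc. Since `u` is bounded and holomorphic, `g` extends holomorphically to `0`, with
`g(0) = 0` because `u → 0` at `i∞`. The Schwarz lemma for `g : 𝔻 → closedBall 0 (δα)` gives
`|g(q)| ≤ δα |q|`, and `|e^{2πiZ}| = e^{−2π Im Z}`.
-/

theorem Complex.norm_le_div_mul_norm_of_mapsTo_ball {E F : Type*} [NormedAddCommGroup E]
    [NormedSpace ℂ E] [NormedAddCommGroup F] [NormedSpace ℂ F] {f : E → F} {z : E} {R₁ R₂ : ℝ}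
    (hd : DifferentiableOn ℂ f (ball 0 R₁)) (h_maps : MapsTo f (ball 0 R₁) (closedBall 0 R₂))
    (h₀ : f 0 = 0) (hz : ‖z‖ < R₁) :
    ‖f z‖ ≤ R₂ / R₁ * ‖z‖ := by
  simpa [h₀] using
    dist_le_div_mul_dist_of_mapsTo_ball hd (by rwa [h₀]) (mem_ball_zero_iff.mpr hz)

namespace Function.Periodic

variable {h M : ℝ} {f : ℂ → ℂ}

theorem im_invQParam_pos (hh : 0 < h) {q : ℂ} (hq₀ : q ≠ 0) (hq₁ : ‖q‖ < 1) :
    0 < (invQParam h q).im := by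
  rw [im_invQParam]
  exact mul_pos_of_neg_of_neg (div_neg_of_neg_of_pos (neg_neg_of_pos hh) (by positivity))
    (Real.log_neg (norm_pos_iff.mpr hq₀) hq₁)

theorem differentiableOn_cuspFunction_ball (hh : 0 < h) (hf : Periodic f h)
    (hol : ∀ z : ℂ, 0 < z.im → DifferentiableAt ℂ f z) (h_bd : BoundedAtFilter (comap im atTop) f) :
    DifferentiableOn ℂ (cuspFunction h f) (ball 0 1) := by
  have h_hol : ∀ᶠ z in comap im atTop, DifferentiableAt ℂ f z :=
    (tendsto_comap.eventually (eventually_gt_atTop 0)).mono hol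
  intro q hq
  rcases eq_or_ne q 0 with rfl | hq₀
  · exact (differentiableAt_cuspFunction_zero hh hf h_hol h_bd).differentiableWithinAt
  · rw [← qParam_right_inv hh.ne' hq₀]
    refine (differentiableAt_cuspFunction hh.ne' hf (hol _ ?_)).differentiableWithinAt
    exact im_invQParam_pos hh hq₀ (mem_ball_zero_iff.mp hq)

theorem mapsTo_cuspFunction_closedBall (hh : 0 < h) (h_zer : ZeroAtFilter (comap im atTop) f)
    (hbound : ∀ z : ℂ, 0 < z.im → ‖f z‖ ≤ M) :
    MapsTo (cuspFunction h f) (ball 0 1) (closedBall 0 M) := by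
  intro q hq
  rw [mem_closedBall_zero_iff]
  rcases eq_or_ne q 0 with rfl | hq₀
  · rw [cuspFunction_zero_of_zero_at_inf hh h_zer, norm_zero]
    exact (norm_nonneg _).trans (hbound I (by simp))
  · rw [cuspFunction_eq_of_nonzero _ _ hq₀]
    exact hbound _ (im_invQParam_pos hh hq₀ (mem_ball_zero_iff.mp hq))

theorem norm_le_mul_exp_of_zeroAtFilter (hh : 0 < h) (hf : Periodic f h)
    (hol : ∀ z : ℂ, 0 < z.im → DifferentiableAt ℂ f z) (h_zer : ZeroAtFilter (comap im atTop) f)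
    (hbound : ∀ z : ℂ, 0 < z.im → ‖f z‖ ≤ M) {z : ℂ} (hz : 0 < z.im) :
    ‖f z‖ ≤ M * Real.exp (-2 * π * z.im / h) := by
  have hschwarz := norm_le_div_mul_norm_of_mapsTo_ball
    (differentiableOn_cuspFunction_ball hh hf hol h_zer.boundedAtFilter)
    (mapsTo_cuspFunction_closedBall hh h_zer hbound) (cuspFunction_zero_of_zero_at_inf hh h_zer)
    (norm_qParam_lt_one hh hz)
  rwa [eq_cuspFunction hh.ne' hf, norm_qParam, div_one] at hschwarz

end Function.Periodic

/- `cuspFunction` needs a function periodic on all of `ℂ`; cutting `f` off outside the upper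
half-plane provides one without changing it there. -/
theorem periodic_indicator_im_pos {h : ℝ} {f : ℂ → ℂ}
    (hf : ∀ z : ℂ, 0 < z.im → f (z + h) = f z) :
    Function.Periodic ({z : ℂ | 0 < z.im}.indicator f) h := by
  intro z
  have him : (z + h).im = z.im := by simp
  simp only [indicator, mem_ofPred_eq, him]
  split_ifs with hz
  exacts [hf z hz, rfl]

theorem norm_le_mul_exp_of_periodic_on_upperHalfPlane {h M : ℝ} {f : ℂ → ℂ} (hh : 0 < h)
    (hf : ∀ z : ℂ, 0 < z.im → f (z + h) = f z) (hol : DifferentiableOn ℂ f {z : ℂ | 0 < z.im})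
    (h_zer : Tendsto f (comap im atTop) (𝓝 0)) (hbound : ∀ z : ℂ, 0 < z.im → ‖f z‖ ≤ M)
    {z : ℂ} (hz : 0 < z.im) :
    ‖f z‖ ≤ M * Real.exp (-2 * π * z.im / h) := by
  have hU : IsOpen {z : ℂ | 0 < z.im} := isOpen_lt continuous_const continuous_im
  have key := norm_le_mul_exp_of_zeroAtFilter (M := M) hh (periodic_indicator_im_pos hf)
    (fun w hw ↦ ((hol w hw).differentiableAt (hU.mem_nhds hw)).congr_of_eventuallyEq <|
      eventually_of_mem (hU.mem_nhds hw) fun v hv ↦ indicator_of_mem hv f)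
    (h_zer.congr' <| (tendsto_comap.eventually (eventually_gt_atTop 0)).mono
      fun w hw ↦ (indicator_of_mem (s := {z : ℂ | 0 < z.im}) hw f).symm)
    (fun w hw ↦ by rw [indicator_of_mem (s := {z : ℂ | 0 < z.im}) hw]; exact hbound w hw) hz
  rwa [indicator_of_mem (s := {z : ℂ | 0 < z.im}) hz] at key

theorem periodic_perturbation_exponential_decay_general (F : ℂ → ℂ) (α δ : ℝ)
    (hol : DifferentiableOn ℂ F {z : ℂ | 0 < z.im})
    (hcomm : ∀ Z : ℂ, 0 < Z.im → F (Z + 1) = F Z + 1)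
    (hlim : Tendsto (fun Z : ℂ => F Z - Z - (α : ℂ)) (comap Complex.im atTop) (nhds 0))
    (hbound : ∀ Z : ℂ, 0 < Z.im → ‖F Z - Z - (α : ℂ)‖ ≤ δ * α) :
    ∀ Z : ℂ, 0 < Z.im →
      ‖F Z - Z - (α : ℂ)‖ ≤ δ * α * Real.exp (-2 * Real.pi * Z.im) := by
  intro Z hZ
  have hper : ∀ Z : ℂ, 0 < Z.im → F (Z + (1 : ℝ)) - (Z + (1 : ℝ)) - α = F Z - Z - α := by
    intro Z hZ
    rw [ofReal_one, hcomm Z hZ]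
    ring
  simpa only [div_one] using norm_le_mul_exp_of_periodic_on_upperHalfPlane one_pos hper
    (by fun_prop) hlim hbound hZ

/-- Let `F` be holomorphic on the upper half-plane `ℍ`, commuting with `T(Z) = Z + 1`, with
`F(Z) − Z − α → 0` as `Im Z → +∞` and `|F(Z) − Z − α| ≤ δα` on `ℍ`. Then in fact
`|F(Z) − Z − α| ≤ δα e^{−2π Im Z}` on `ℍ`. -/
theorem periodic_perturbation_exponential_decay (F : ℂ → ℂ) (α δ : ℝ) (hα : 0 < α)
    (hδ : 0 < δ)
    (hol : DifferentiableOn ℂ F {z : ℂ | 0 < z.im})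
    (hcomm : ∀ Z : ℂ, 0 < Z.im → F (Z + 1) = F Z + 1)
    (hlim : Tendsto (fun Z : ℂ => F Z - Z - (α : ℂ)) (comap Complex.im atTop) (nhds 0))
    (hbound : ∀ Z : ℂ, 0 < Z.im → ‖F Z - Z - (α : ℂ)‖ ≤ δ * α) :
    ∀ Z : ℂ, 0 < Z.im →
      ‖F Z - Z - (α : ℂ)‖ ≤ δ * α * Real.exp (-2 * Real.pi * Z.im) :=
  periodic_perturbation_exponential_decay_general F α δ hol hcomm hlim hbound
end
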